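/- For every integer n ≥ 1 define c_n^1 = ∑_{j=⌈(n+1)/2⌉}^{n} [ 2 ∑_{i=n−j+1}^{j} (−1)^{i+j} ( n + 2(n−i)(n−j)/(1+i+j−n) ) / ( (n−j)! (n−i)! (i+j−n)! ) − ( n + 2(n−j)^2/(1+2j−n) ) / ( ((n−j)!)^2 (2j−n)! ) ]. Then for all real a > 0, λ > 0 and ε > 0, the series λ a ∑_{n=1}^∞ c_n^1 (2λε)^{n−1} converges absolutely and equals a ( λ e^{−2λε} − 4 λ^2 ε e^{−4λε} ). (This is the closed form of the variance of the Euler characteristic of the random Rips–Vietoris complex in dimension one.) -/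

import Mathlib

/-- The coefficient `c_n^1` (the `d = 1` case of the coefficients in the series for the
variance of the Euler characteristic):
`c_n^1 = ∑_{j=⌈(n+1)/2⌉}^{n} [ 2 ∑_{i=n−j+1}^{j} (−1)^{i+j} (n + 2(n−i)(n−j)/(1+i+j−n))
/ ((n−j)!(n−i)!(i+j−n)!) − (n + 2(n−j)²/(1+2j−n)) / (((n−j)!)²(2j−n)!) ]`. -/
noncomputable def cCoeff (n : ℕ) : ℝ :=
  ∑ j ∈ Finset.Icc ((n + 2) / 2) n,
    (2 * ∑ i ∈ Finset.Icc (n - j + 1) j,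
        (-1 : ℝ) ^ (i + j)
          * ((n : ℝ) + 2 * ((n - i : ℕ) : ℝ) * ((n - j : ℕ) : ℝ) / ((1 + i + j - n : ℕ) : ℝ))
          / ((Nat.factorial (n - j) : ℝ) * (Nat.factorial (n - i) : ℝ)
              * (Nat.factorial (i + j - n) : ℝ))
      - ((n : ℝ) + 2 * ((n - j : ℕ) : ℝ) ^ 2 / ((1 + 2 * j - n : ℕ) : ℝ))
          / ((Nat.factorial (n - j) : ℝ) ^ 2 * (Nat.factorial (2 * j - n) : ℝ)))

/-!
Substituting `k = n + 1 - j`, `l = n + 1 - i` turns `c_{n+1}` into the sum, over the triangle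
`k + l ≤ n`, of a summand symmetric in `k` and `l`: the doubled inner sum minus the diagonal term
is the triangle folded along its diagonal. With `r = n - k - l` and
`a_k = (-1)^k / k!` that summand is `(n + 1) a_k a_l / (r + 1)! + 2 (k a_k) (l a_l) / (r + 2)!`,
so the triangle sum is a coefficient of a product of exponential series:
`c_{n+1} = (n + 1) [X^{n+1}] e^{-2X} (e^X - 1) + 2 [X^{n+2}] X² e^{-2X} (e^X - 1 - X)
  = ((-1)^n + n (-2)^n) / n!`.
Hence `∑ c_{n+1} x^n = e^{-x} - 2x e^{-2x}`, and `x = 2λε` gives the formula.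
-/

open Finset Nat PowerSeries

theorem sum_fold_eq_sum_triangle {M : Type*} [AddCommGroup M] (h : ℕ → ℕ → M)
    (hsymm : ∀ k l, h k l = h l k) (n : ℕ) :
    ∑ k ∈ range (n / 2 + 1), (2 • ∑ l ∈ Icc k (n - k), h k l - h k k)
      = ∑ p ∈ antidiagonal n, ∑ q ∈ antidiagonal p.1, h q.1 q.2 := by
  set T := (range (n + 1) ×ˢ range (n + 1)).filter (fun q => q.1 + q.2 ≤ n)
  have memT : ∀ q : ℕ × ℕ, q ∈ T ↔ q.1 + q.2 ≤ n := by
    intro q; simp only [T, mem_filter, mem_product, mem_range]; omega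
  set U := T.filter (fun q => q.1 ≤ q.2)
  set L := T.filter (fun q => q.2 ≤ q.1)
  have hunion : U ∪ L = T := by
    rw [← filter_or]; exact filter_true_of_mem fun q _ => le_total _ _
  have hU : ∑ q ∈ U, h q.1 q.2 = ∑ k ∈ range (n / 2 + 1), ∑ l ∈ Icc k (n - k), h k l :=
    sum_finset_product U _ _ fun q => by simp only [U, mem_filter, memT, mem_range, mem_Icc]; omega
  have hL : ∑ q ∈ L, h q.1 q.2 = ∑ q ∈ U, h q.1 q.2 :=
    sum_equiv (Equiv.prodComm ℕ ℕ)
      (fun q => by simp only [U, L, mem_filter, memT, Equiv.prodComm_apply, Prod.fst_swap,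
        Prod.snd_swap]; omega)
      fun q _ => hsymm _ _
  have hD : ∑ q ∈ U ∩ L, h q.1 q.2 = ∑ k ∈ range (n / 2 + 1), h k k := by
    rw [sum_finset_product (U ∩ L) (range (n / 2 + 1)) (fun k => {k})
      fun q => by simp only [U, L, mem_inter, mem_filter, memT, mem_range, mem_singleton]; omega]
    simp only [sum_singleton]
  have hT :
      ∑ q ∈ T, h q.1 q.2 = ∑ p ∈ antidiagonal n, ∑ q ∈ antidiagonal p.1, h q.1 q.2 := by
    rw [Nat.sum_antidiagonal_eq_sum_range_succ_mk, ← sum_fiberwise_of_maps_to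
      (g := fun q => q.1 + q.2) (t := range (n + 1))
      fun q hq => mem_range.2 (Nat.lt_succ_of_le ((memT q).1 hq))]
    refine sum_congr rfl fun m hm => sum_congr ?_ fun _ _ => rfl
    rw [mem_range] at hm
    ext q; simp only [mem_filter, memT, HasAntidiagonal.mem_antidiagonal]; omega
  rw [sum_sub_distrib, ← smul_sum, two_nsmul, ← hU, ← hD, ← hT, ← hunion,
    sub_eq_iff_eq_add, sum_union_inter, hL]

namespace PowerSeries

theorem coeff_mul_mul {R : Type*} [CommSemiring R] (P Q S : R⟦X⟧) (n : ℕ) :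
    coeff n (P * Q * S) = ∑ p ∈ antidiagonal n,
      (∑ q ∈ antidiagonal p.1, coeff q.1 P * coeff q.2 Q) * coeff p.2 S := by
  simp only [coeff_mul]

variable {K : Type*} [Field K] [CharZero K]

theorem coeff_rescale_exp (a : K) (n : ℕ) : coeff n (rescale a (exp K)) = a ^ n / n ! := by
  simp [coeff_rescale, coeff_exp, div_eq_mul_inv]

theorem coeff_C_mul_X_mul_rescale_exp (a : K) (n : ℕ) :
    coeff n (C a * X * rescale a (exp K)) = n * a ^ n / n ! := by
  rcases n with _ | n
  · simp
  · rw [mul_assoc, coeff_C_mul, coeff_succ_X_mul, coeff_rescale_exp, factorial_succ]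
    push_cast
    field_simp
    ring

theorem X_mul_mk_inv_factorial_succ : X * mk (fun r => (1 : K) / (r + 1) !) = exp K - 1 := by
  ext (_ | r)
  · simp
  · simp [coeff_exp, coeff_one]

theorem X_sq_mul_mk_inv_factorial_add_two :
    X ^ 2 * mk (fun r => (1 : K) / (r + 2) !) = exp K - 1 - X := by
  ext (_ | _ | r)
  · simp
  · simp [coeff_X_pow_mul', coeff_one, coeff_X]
  · rw [coeff_X_pow_mul', if_pos (by omega)]
    simp [coeff_one, coeff_X]

end PowerSeries

-- The summand of `cCoeff (n + 1)` at `j = n + 1 - k`, `i = n + 1 - l`.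
noncomputable def cTerm (n k l : ℕ) : ℝ :=
  (n + 1) * ((-1) ^ k / k ! * ((-1) ^ l / l !) * (1 / (n - (k + l) + 1)!))
    + 2 * (k * (-1) ^ k / k ! * (l * (-1) ^ l / l !) * (1 / (n - (k + l) + 2)!))

theorem cTerm_comm (n k l : ℕ) : cTerm n k l = cTerm n l k := by
  simp only [cTerm, add_comm l k]; ring

theorem cCoeff_summand_eq_cTerm {n i j k l r : ℕ} (hi : i + l = n + 1) (hj : j + k = n + 1)
    (hr : k + l + r = n) :
    (-1 : ℝ) ^ (i + j)
        * ((n + 1 : ℕ) + 2 * ((n + 1 - i : ℕ) : ℝ) * ((n + 1 - j : ℕ) : ℝ)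
            / ((1 + i + j - (n + 1) : ℕ) : ℝ))
        / (((n + 1 - j)! : ℝ) * ((n + 1 - i)! : ℝ) * ((i + j - (n + 1))! : ℝ))
      = cTerm n k l := by
  have hsign : (-1 : ℝ) ^ (i + j) = (-1) ^ k * (-1) ^ l := by
    rw [← pow_add, neg_one_pow_congr]; simp only [Nat.even_iff]; omega
  rw [hsign, cTerm, show n + 1 - i = l by omega, show n + 1 - j = k by omega,
    show 1 + i + j - (n + 1) = r + 2 by omega, show i + j - (n + 1) = r + 1 by omega,
    show n - (k + l) = r by omega, factorial_succ (r + 1)]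
  push_cast
  field_simp
  ring

theorem cCoeff_succ_eq_sum_fold (n : ℕ) :
    cCoeff (n + 1)
      = ∑ k ∈ range (n / 2 + 1), (2 * ∑ l ∈ Icc k (n - k), cTerm n k l - cTerm n k k) := by
  refine sum_nbij' (fun j => n + 1 - j) (fun k => n + 1 - k) ?_ ?_ ?_ ?_ fun j hj => ?_
  · intro j hj; simp only [mem_Icc, mem_range] at hj ⊢; omega
  · intro k hk; simp only [mem_Icc, mem_range] at hk ⊢; omega
  · intro j hj; simp only [mem_Icc] at hj; omega
  · intro k hk; simp only [mem_range] at hk; omega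
  rw [mem_Icc] at hj
  congr 1
  · congr 1
    refine sum_nbij' (fun i => n + 1 - i) (fun l => n + 1 - l) ?_ ?_ ?_ ?_ fun i hi => ?_
    · intro i hi; simp only [mem_Icc] at hi ⊢; omega
    · intro l hl; simp only [mem_Icc] at hl ⊢; omega
    · intro i hi; simp only [mem_Icc] at hi; omega
    · intro l hl; simp only [mem_Icc] at hl; omega
    rw [mem_Icc] at hi
    exact cCoeff_summand_eq_cTerm (r := i + j - (n + 2)) (by omega) (by omega) (by omega)
  · rw [← cCoeff_summand_eq_cTerm (i := j) (j := j) (l := n + 1 - j) (r := 2 * j - (n + 2))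
      (by omega) (by omega) (by omega)]
    rw [← two_mul, add_assoc, ← two_mul, pow_mul, neg_one_sq, one_pow, one_mul, sq, sq,
      mul_assoc 2]

theorem cCoeff_succ_eq_coeff (n : ℕ) :
    cCoeff (n + 1)
      = (n + 1) * coeff n (rescale (-1) (exp ℝ) * rescale (-1) (exp ℝ)
            * PowerSeries.mk fun r => (1 : ℝ) / (r + 1) !)
        + 2 * coeff n (C (-1 : ℝ) * X * rescale (-1) (exp ℝ)
            * (C (-1 : ℝ) * X * rescale (-1) (exp ℝ))
            * PowerSeries.mk fun r => (1 : ℝ) / (r + 2) !) := by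
  have hfold := sum_fold_eq_sum_triangle (cTerm n) (cTerm_comm n) n
  simp only [nsmul_eq_mul, Nat.cast_ofNat] at hfold
  rw [cCoeff_succ_eq_sum_fold, hfold, coeff_mul_mul, coeff_mul_mul, mul_sum, mul_sum,
    ← sum_add_distrib]
  refine sum_congr rfl fun p hp => ?_
  rw [sum_mul, sum_mul, mul_sum, mul_sum, ← sum_add_distrib]
  refine sum_congr rfl fun q hq => ?_
  rw [HasAntidiagonal.mem_antidiagonal] at hp hq
  rw [show p.2 = n - (q.1 + q.2) by omega, cTerm]
  simp only [coeff_mk, coeff_rescale_exp, coeff_C_mul_X_mul_rescale_exp]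

theorem cCoeff_succ (n : ℕ) : cCoeff (n + 1) = ((-1) ^ n + n * (-2) ^ n) / n ! := by
  have hsq : rescale (-1 : ℝ) (exp ℝ) * rescale (-1) (exp ℝ) = rescale (-2) (exp ℝ) := by
    rw [exp_mul_exp_eq_exp_add]; norm_num
  have hexp : rescale (-2 : ℝ) (exp ℝ) * exp ℝ = rescale (-1) (exp ℝ) := by
    simpa [rescale_one, show (-2 : ℝ) + 1 = -1 by norm_num]
      using exp_mul_exp_eq_exp_add (-2 : ℝ) 1
  have h1 : X * (rescale (-1) (exp ℝ) * rescale (-1) (exp ℝ)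
        * PowerSeries.mk fun r => (1 : ℝ) / (r + 1) !)
      = rescale (-1) (exp ℝ) - rescale (-2) (exp ℝ) := by
    rw [hsq, mul_left_comm, X_mul_mk_inv_factorial_succ, mul_sub, hexp, mul_one]
  have h2 : C (-1 : ℝ) * X * rescale (-1) (exp ℝ) * (C (-1) * X * rescale (-1) (exp ℝ))
        * (PowerSeries.mk fun r => (1 : ℝ) / (r + 2) !)
      = rescale (-1) (exp ℝ) - rescale (-2) (exp ℝ) - X * rescale (-2) (exp ℝ) := by
    calc _ = rescale (-2 : ℝ) (exp ℝ)
            * (X ^ 2 * PowerSeries.mk fun r => (1 : ℝ) / (r + 2) !) := by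
          rw [← hsq, map_neg, map_one]; ring
      _ = _ := by rw [X_sq_mul_mk_inv_factorial_add_two, mul_sub, mul_sub, hexp, mul_one]; ring
  have hX : coeff n (X * rescale (-2 : ℝ) (exp ℝ)) = -((n : ℝ) * (-2) ^ n / n !) / 2 := by
    have h := coeff_C_mul_X_mul_rescale_exp (-2 : ℝ) n
    rw [mul_assoc, coeff_C_mul] at h
    linear_combination -h / 2
  rw [cCoeff_succ_eq_coeff, ← coeff_succ_X_mul, h1, h2]
  simp only [map_sub, hX, coeff_rescale_exp, factorial_succ]
  push_cast
  field_simp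
  ring

theorem Real.hasSum_natCast_mul_pow_div_factorial (y : ℝ) :
    HasSum (fun n : ℕ => n * y ^ n / n !) (y * Real.exp y) := by
  have hshift : (fun n : ℕ => ((n + 1 : ℕ) : ℝ) * y ^ (n + 1) / (n + 1)!)
      = fun n => y * (y ^ n / n !) := by
    ext n
    rw [factorial_succ]
    push_cast
    field_simp
    ring
  rw [← hasSum_nat_add_iff' 1, hshift, Real.exp_eq_exp_ℝ]
  simpa using (NormedSpace.expSeries_div_hasSum_exp y).mul_left y

theorem hasSum_cCoeff_succ_mul_pow (x : ℝ) :
    HasSum (fun n : ℕ => cCoeff (n + 1) * x ^ n)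
      (Real.exp (-x) - 2 * x * Real.exp (-(2 * x))) := by
  have hexp : HasSum (fun n : ℕ => (-x) ^ n / n !) (Real.exp (-x)) := by
    rw [Real.exp_eq_exp_ℝ]; exact NormedSpace.expSeries_div_hasSum_exp _
  convert hexp.add (Real.hasSum_natCast_mul_pow_div_factorial (-(2 * x))) using 1
  · ext n
    rw [cCoeff_succ]
    ring
  · ring

theorem variance_euler_characteristic_dim_one_general
    (a lam ε : ℝ) :
    Summable (fun n : ℕ => |cCoeff (n + 1) * (2 * lam * ε) ^ n|) ∧
    lam * a * ∑' n : ℕ, cCoeff (n + 1) * (2 * lam * ε) ^ n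
      = a * (lam * Real.exp (-(2 * lam * ε)) - 4 * lam ^ 2 * ε * Real.exp (-(4 * lam * ε))) := by
  have h := hasSum_cCoeff_succ_mul_pow (2 * lam * ε)
  refine ⟨h.summable.abs, ?_⟩
  rw [h.tsum_eq, show 2 * (2 * lam * ε) = 4 * lam * ε by ring]
  ring

/-- Variance of the Euler characteristic in dimension one: for all
`a, λ, ε > 0`, the series `λ a ∑_{n≥1} c_n^1 (2λε)^{n−1}` converges absolutely and
equals `a (λ e^{−2λε} − 4λ²ε e^{−4λε})`. -/
theorem variance_euler_characteristic_dim_one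
    (a lam ε : ℝ) (ha : 0 < a) (hlam : 0 < lam) (hε : 0 < ε) :
    Summable (fun n : ℕ => |cCoeff (n + 1) * (2 * lam * ε) ^ n|) ∧
    lam * a * ∑' n : ℕ, cCoeff (n + 1) * (2 * lam * ε) ^ n
      = a * (lam * Real.exp (-(2 * lam * ε)) - 4 * lam ^ 2 * ε * Real.exp (-(4 * lam * ε))) :=
  variance_euler_characteristic_dim_one_general a lam ε
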